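/- Let K and Q be convex bodies in R^n with c(K) = 0, V(K) = 1, and V(K Δ Q) ≤ t for some t ∈ (0, 1/(4^n e)). Then ‖c(Q)‖_{K-K} ≤ 4nt. -/

import Mathlib

/-!
Write `a = V(Q \ K)` and `b = V(K \ Q)`, so that `a + b ≤ t`. If a point `x ∈ Q` had
`‖x‖_{K-K} > 3`, the homothetic copy `x + (K ∩ Q - x) / 2` of `K ∩ Q` would lie in `Q \ K`,
giving `2⁻ⁿ (1 - t) ≤ a ≤ t`, which the smallness of `t` rules out. So `‖·‖_{K-K} ≤ 3` on `Q`,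
and `‖·‖_{K-K} ≤ 1` on `K ∋ 0`. As `c(K) = 0`, `V(Q) c(Q) = ∫_{Q \ K} x - ∫_{K \ Q} x`, and
each integral is a volume times an average lying in `Q` resp. `K`; hence
`‖c(Q)‖_{K-K} ≤ (3a + b) / (1 - b + a) ≤ 4t`.
-/

open MeasureTheory Metric Filter Set
open scoped RealInnerProductSpace ENNReal Topology Pointwise

noncomputable section

/-- Euclidean `n`-space. -/
abbrev Euc (n : ℕ) := EuclideanSpace ℝ (Fin n)

/-- `u` is an outer unit normal of `K` at `x`. -/
def isOuterNormal {n : ℕ} (K : Set (Euc n)) (x u : Euc n) : Prop :=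
  ‖u‖ = 1 ∧ ∀ y ∈ K, ⟪y, u⟫ ≤ ⟪x, u⟫

open scoped Classical in
/-- The Gauss map of `K`: an outer unit normal at a boundary point (junk value `0`
if none exists). -/
noncomputable def gaussMap {n : ℕ} (K : Set (Euc n)) (x : Euc n) : Euc n :=
  if h : ∃ u, isOuterNormal K x u then h.choose else 0

/-- The cone-volume measure of `K` evaluated at `ω ⊆ Sⁿ⁻¹`:
`V_K(ω) = (1/n) ∫_{ν_K⁻¹(ω)} ⟨x, ν_K(x)⟩ dH_{n-1}(x)`. -/
noncomputable def coneVolume (n : ℕ) (K : Set (Euc n)) (ω : Set (Euc n)) : ℝ :=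
  (n : ℝ)⁻¹ * ∫ x in {x ∈ frontier K | gaussMap K x ∈ ω},
      ⟪x, gaussMap K x⟫ ∂(μH[(n - 1 : ℝ)])

/-- The orthogonal projection `K|L` of `K` onto the subspace `L`. -/
noncomputable def projSet {n : ℕ} (L : Submodule ℝ (Euc n)) (K : Set (Euc n)) : Set (Euc n) :=
  (fun y => (L.orthogonalProjectionOnto y : Euc n)) '' K

section DifferenceBody

variable {E : Type*} [AddCommGroup E] [Module ℝ E] {K : Set E}

lemma gauge_sub_self_neg (x : E) : gauge (K - K) (-x) = gauge (K - K) x := by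
  rw [← gauge_neg_set_eq_gauge_neg, neg_sub]

lemma gauge_sub_self_le_one (h0 : (0 : E) ∈ K) {y : E} (hy : y ∈ K) : gauge (K - K) y ≤ 1 :=
  gauge_le_one_of_mem (by simpa using Set.sub_mem_sub hy h0)

lemma gauge_sub_self_le_of_homothety_mem (hK : Convex ℝ K) (habs : Absorbent ℝ (K - K))
    (h0 : (0 : E) ∈ K) {x y : E} (hy : y ∈ K) {r : ℝ} (hr : r < 1)
    (hz : AffineMap.homothety x r y ∈ K) : gauge (K - K) x ≤ (1 - r)⁻¹ + 1 := by
  set z := AffineMap.homothety x r y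
  have hzy : z - y = (1 - r) • (x - y) := by
    simp only [z, AffineMap.homothety_apply, vsub_eq_sub, vadd_eq_add]
    module
  have hx : x = (1 - r)⁻¹ • (z - y) + y := by
    rw [hzy, smul_smul, inv_mul_cancel₀ (sub_ne_zero.2 hr.ne'), one_smul, sub_add_cancel]
  calc gauge (K - K) x ≤ gauge (K - K) ((1 - r)⁻¹ • (z - y)) + gauge (K - K) y :=
        hx ▸ gauge_add_le (hK.sub hK) habs _ _
    _ = (1 - r)⁻¹ * gauge (K - K) (z - y) + gauge (K - K) y := by
        rw [gauge_smul_of_nonneg (inv_nonneg.2 (sub_nonneg.2 hr.le)), smul_eq_mul]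
    _ ≤ (1 - r)⁻¹ * 1 + 1 :=
        add_le_add (mul_le_mul_of_nonneg_left (gauge_le_one_of_mem (Set.sub_mem_sub hz hy))
          (inv_nonneg.2 (sub_nonneg.2 hr.le))) (gauge_sub_self_le_one h0 hy)
    _ = (1 - r)⁻¹ + 1 := by rw [mul_one]

lemma homothety_image_inter_subset_sdiff {Q : Set E} (hK : Convex ℝ K)
    (habs : Absorbent ℝ (K - K)) (h0 : (0 : E) ∈ K) (hQ : Convex ℝ Q) {x : E} (hx : x ∈ Q)
    {r : ℝ} (hr0 : 0 ≤ r) (hr1 : r < 1) (hgx : (1 - r)⁻¹ + 1 < gauge (K - K) x) :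
    AffineMap.homothety x r '' (K ∩ Q) ⊆ Q \ K := by
  rintro _ ⟨y, ⟨hyK, hyQ⟩, rfl⟩
  refine ⟨?_, fun hz => hgx.not_ge (gauge_sub_self_le_of_homothety_mem hK habs h0 hyK hr1 hz)⟩
  have : AffineMap.homothety x r y = (1 - r) • x + r • y := by
    simp only [AffineMap.homothety_apply, vsub_eq_sub, vadd_eq_add]
    module
  exact this ▸ hQ hx hyQ (by linarith) hr0 (by ring)

end DifferenceBody

lemma sub_self_mem_nhds_zero {E : Type*} [AddCommGroup E] [TopologicalSpace E]
    [IsTopologicalAddGroup E] {K : Set E} (hK : (interior K).Nonempty) : K - K ∈ 𝓝 0 := by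
  obtain ⟨z, hz⟩ := hK
  refine mem_of_superset ?_
    (sub_subset_sub interior_subset (singleton_subset_iff.2 (interior_subset hz)))
  exact isOpen_interior.sub_right.mem_nhds ⟨z, hz, z, rfl, sub_self z⟩

lemma setIntegral_sub_setIntegral {α F : Type*} [MeasurableSpace α] [NormedAddCommGroup F]
    [NormedSpace ℝ F] {μ : Measure α} {K Q : Set α} {f : α → F} (hK : MeasurableSet K)
    (hQ : MeasurableSet Q) (hfK : IntegrableOn f K μ) (hfQ : IntegrableOn f Q μ) :
    ∫ x in Q, f x ∂μ - ∫ x in K, f x ∂μ = ∫ x in Q \ K, f x ∂μ - ∫ x in K \ Q, f x ∂μ := by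
  rw [← integral_inter_add_sdiff hK hfQ, ← integral_inter_add_sdiff hQ hfK, inter_comm]
  abel

section Measure

variable {E : Type*} [NormedAddCommGroup E] [NormedSpace ℝ E] [MeasurableSpace E]
  {μ : Measure E} {K Q : Set E}

lemma gauge_le_of_measureReal_sdiff_lt [BorelSpace E] [FiniteDimensional ℝ E]
    [μ.IsAddHaarMeasure] (hK : Convex ℝ K) (habs : Absorbent ℝ (K - K)) (h0 : (0 : E) ∈ K)
    (hQ : Convex ℝ Q) (hQfin : μ Q ≠ ∞) {r : ℝ} (hr0 : 0 ≤ r) (hr1 : r < 1)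
    (hvol : μ.real (Q \ K) < r ^ Module.finrank ℝ E * μ.real (K ∩ Q))
    {x : E} (hx : x ∈ Q) : gauge (K - K) x ≤ (1 - r)⁻¹ + 1 := by
  by_contra! hgx
  refine hvol.not_ge ?_
  calc r ^ Module.finrank ℝ E * μ.real (K ∩ Q)
      = μ.real (AffineMap.homothety x r '' (K ∩ Q)) := by
        rw [measureReal_def, measureReal_def, Measure.addHaar_image_homothety,
          ENNReal.toReal_mul, ENNReal.toReal_ofReal (abs_nonneg _), abs_of_nonneg (by positivity)]
    _ ≤ μ.real (Q \ K) :=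
      measureReal_mono (homothety_image_inter_subset_sdiff hK habs h0 hQ hx hr0 hr1 hgx)
        (measure_ne_top_of_subset sdiff_subset hQfin)

variable [CompleteSpace E]

lemma zero_mem_of_setIntegral_id_eq_zero [OpensMeasurableSpace E]
    [IsFiniteMeasureOnCompacts μ] (hK : Convex ℝ K) (hKc : IsCompact K) (hμK : μ K ≠ 0)
    (hcent : ∫ x in K, x ∂μ = 0) : (0 : E) ∈ K := by
  have := hK.set_average_mem hKc.isClosed hμK hKc.measure_lt_top.ne
    (ae_restrict_mem hKc.isClosed.measurableSet)
    (continuous_id.continuousOn.integrableOn_compact hKc)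
  rwa [setAverage_eq, hcent, smul_zero] at this

lemma gauge_setIntegral_id_le {C S A : Set E} (hS : Convex ℝ S) (hSc : IsClosed S)
    (hAS : A ⊆ S) (hA : MeasurableSet A) (hμA : μ A ≠ ∞) (hint : IntegrableOn id A μ) {R : ℝ}
    (hR : ∀ x ∈ S, gauge C x ≤ R) : gauge C (∫ x in A, x ∂μ) ≤ μ.real A * R := by
  rcases eq_or_ne (μ A) 0 with h0 | h0
  · simp [Measure.restrict_eq_zero.2 h0, measureReal_def, h0]
  have havg : ⨍ x in A, x ∂μ ∈ S :=
    hS.set_average_mem hSc h0 hμA ((ae_restrict_mem hA).mono fun _ hx => hAS hx) hint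
  rw [← measure_smul_setAverage _ hμA, gauge_smul_of_nonneg measureReal_nonneg, smul_eq_mul]
  exact mul_le_mul_of_nonneg_left (hR _ havg) measureReal_nonneg

lemma gauge_setIntegral_id_le_of_setIntegral_eq_zero [OpensMeasurableSpace E]
    [IsFiniteMeasureOnCompacts μ] (hK : Convex ℝ K) (hKc : IsCompact K) (hQ : Convex ℝ Q)
    (hQc : IsCompact Q) (hcent : ∫ x in K, x ∂μ = 0) (habs : Absorbent ℝ (K - K))
    (h0 : (0 : E) ∈ K) {R : ℝ} (hR : ∀ x ∈ Q, gauge (K - K) x ≤ R) :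
    gauge (K - K) (∫ x in Q, x ∂μ) ≤ μ.real (Q \ K) * R + μ.real (K \ Q) := by
  have hKm := hKc.isClosed.measurableSet
  have hQm := hQc.isClosed.measurableSet
  have hKi : IntegrableOn id K μ := continuous_id.continuousOn.integrableOn_compact hKc
  have hQi : IntegrableOn id Q μ := continuous_id.continuousOn.integrableOn_compact hQc
  have hsplit := setIntegral_sub_setIntegral (f := id) hKm hQm hKi hQi
  simp only [id, hcent, sub_zero] at hsplit
  rw [hsplit]
  calc _ ≤ gauge (K - K) (∫ x in Q \ K, x ∂μ) + gauge (K - K) (∫ x in K \ Q, x ∂μ) := by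
        rw [sub_eq_add_neg _ (∫ x in K \ Q, x ∂μ), ← gauge_sub_self_neg (∫ x in K \ Q, x ∂μ)]
        exact gauge_add_le (hK.sub hK) habs _ _
    _ ≤ _ := by
      gcongr
      · exact gauge_setIntegral_id_le hQ hQc.isClosed sdiff_subset (hQm.diff hKm)
          (measure_ne_top_of_subset sdiff_subset hQc.measure_lt_top.ne)
          (hQi.mono_set sdiff_subset) hR
      · simpa using gauge_setIntegral_id_le hK hKc.isClosed sdiff_subset (hKm.diff hQm)
          (measure_ne_top_of_subset sdiff_subset hKc.measure_lt_top.ne)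
          (hKi.mono_set sdiff_subset) fun _ => gauge_sub_self_le_one h0

end Measure

lemma two_pow_mul_add_lt_one {n : ℕ} {t : ℝ} (ht0 : 0 ≤ t)
    (ht : t < 1 / (4 ^ n * Real.exp 1)) : 2 ^ n * t + t < 1 := by
  rw [lt_div_iff₀ (by positivity)] at ht
  have h2 : (2 : ℝ) ^ n ≤ 4 ^ n := pow_le_pow_left₀ (by norm_num) (by norm_num) n
  have h1 : (1 : ℝ) ≤ 2 ^ n := one_le_pow₀ (by norm_num)
  nlinarith [mul_le_mul_of_nonneg_right h1 ht0, mul_le_mul_of_nonneg_right h2 ht0,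
    mul_nonneg (sub_nonneg.2 Real.exp_one_gt_two.le) (mul_nonneg (pow_nonneg zero_le_four n) ht0)]

lemma lt_half_pow_mul_one_sub {n : ℕ} {t a b : ℝ} (ha : 0 ≤ a) (hb : 0 ≤ b) (hab : b + a ≤ t)
    (ht : 2 ^ n * t + t < 1) : a < (1 / 2) ^ n * (1 - b) := by
  have h1 : (1 : ℝ) ≤ 2 ^ n := one_le_pow₀ (by norm_num)
  rw [div_pow, one_pow, one_div_mul_eq_div, lt_div_iff₀ (by positivity)]
  nlinarith [mul_le_mul_of_nonneg_left (show a ≤ t - b by linarith) (pow_nonneg zero_le_two n),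
    mul_nonneg hb (sub_nonneg.2 h1)]

lemma inv_mul_le_four_mul {n : ℕ} (hn : 1 ≤ n) {t a b : ℝ} (ha : 0 ≤ a) (hb : 0 ≤ b)
    (hab : b + a ≤ t) (ht : 2 ^ n * t + t < 1) : (1 - b + a)⁻¹ * (a * 3 + b) ≤ 4 * n * t := by
  have hn1 : (1 : ℝ) ≤ n := by exact_mod_cast hn
  have ht3 : 3 * t < 1 := by
    nlinarith [mul_le_mul_of_nonneg_right (le_self_pow₀ one_le_two (by omega) : (2 : ℝ) ≤ 2 ^ n)
      (by linarith : 0 ≤ t)]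
  rw [inv_mul_le_iff₀ (by linarith)]
  nlinarith [mul_nonneg (by linarith : 0 ≤ 1 - b + a)
      (mul_nonneg (by linarith : 0 ≤ t) (sub_nonneg.2 hn1)),
    mul_nonneg hb (by linarith : 0 ≤ 2 - 4 * t), mul_nonneg ha (by linarith : 0 ≤ t)]

theorem stmt12_general {n : ℕ} (K Q : Set (Euc n)) (hK : Convex ℝ K) (hKcp : IsCompact K)
    (hKint : (interior K).Nonempty) (hcent : ∫ x in K, x ∂volume = 0)
    (hvolK : volume K = 1)
    (hQ : Convex ℝ Q) (hQcp : IsCompact Q)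
    (t : ℝ) (ht0 : 0 < t) (ht1 : t < 1 / (4 ^ n * Real.exp 1))
    (hvol : (volume (symmDiff K Q)).toReal ≤ t) :
    gauge (K - K) ((volume Q).toReal⁻¹ • ∫ x in Q, x ∂volume) ≤ 4 * n * t := by
  rcases Nat.eq_zero_or_pos n with rfl | hn
  · rw [Subsingleton.elim ((volume Q).toReal⁻¹ • ∫ x in Q, x ∂volume) 0, gauge_zero]
    positivity
  have hKm := hKcp.isClosed.measurableSet
  have hKfin : volume K ≠ ∞ := hKcp.measure_lt_top.ne
  have hQfin : volume Q ≠ ∞ := hQcp.measure_lt_top.ne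
  set a := volume.real (Q \ K)
  set b := volume.real (K \ Q)
  have hab : b + a ≤ t := by
    rwa [← measureReal_def, measureReal_symmDiff_eq hKm hQcp.isClosed.measurableSet] at hvol
  have hKQ : volume.real (K ∩ Q) = 1 - b := by
    rw [eq_sub_iff_add_eq, measureReal_inter_add_sdiff hQcp.isClosed.measurableSet hKfin,
      measureReal_def, hvolK, ENNReal.toReal_one]
  have hQvol : volume.real Q = 1 - b + a := by
    rw [← measureReal_inter_add_sdiff hKm hQfin, inter_comm, hKQ]
  have hsmall := two_pow_mul_add_lt_one ht0.le ht1
  have h0K : (0 : Euc n) ∈ K :=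
    zero_mem_of_setIntegral_id_eq_zero hK hKcp (by rw [hvolK]; exact one_ne_zero) hcent
  have habs : Absorbent ℝ (K - K) := absorbent_nhds_zero (sub_self_mem_nhds_zero hKint)
  have hcopy : volume.real (Q \ K) <
      (1 / 2) ^ Module.finrank ℝ (Euc n) * volume.real (K ∩ Q) := by
    rw [finrank_euclideanSpace_fin, hKQ]
    exact lt_half_pow_mul_one_sub measureReal_nonneg measureReal_nonneg hab hsmall
  have hQ3 : ∀ x ∈ Q, gauge (K - K) x ≤ 3 := fun x hx =>
    (gauge_le_of_measureReal_sdiff_lt hK habs h0K hQ hQfin (by norm_num) (by norm_num)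
      hcopy hx).trans_eq (by norm_num)
  calc gauge (K - K) ((volume Q).toReal⁻¹ • ∫ x in Q, x ∂volume)
      = (volume.real Q)⁻¹ * gauge (K - K) (∫ x in Q, x ∂volume) := by
        rw [gauge_smul_of_nonneg (inv_nonneg.2 ENNReal.toReal_nonneg), smul_eq_mul,
          measureReal_def]
    _ ≤ (volume.real Q)⁻¹ * (a * 3 + b) := mul_le_mul_of_nonneg_left
        (gauge_setIntegral_id_le_of_setIntegral_eq_zero hK hKcp hQ hQcp hcent habs h0K hQ3)
        (inv_nonneg.2 measureReal_nonneg)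
    _ ≤ 4 * n * t :=
        hQvol ▸ inv_mul_le_four_mul hn measureReal_nonneg measureReal_nonneg hab hsmall

/-- if `c(K) = 0`, `V(K) = 1` and `V(K Δ Q) ≤ t` with
`t ∈ (0, 1/(4ⁿe))`, then `‖c(Q)‖_{K-K} ≤ 4nt`. -/
theorem stmt12 {n : ℕ} (K Q : Set (Euc n)) (hK : Convex ℝ K) (hKcp : IsCompact K)
    (hKint : (interior K).Nonempty) (hcent : ∫ x in K, x ∂volume = 0)
    (hvolK : volume K = 1)
    (hQ : Convex ℝ Q) (hQcp : IsCompact Q) (hQint : (interior Q).Nonempty)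
    (t : ℝ) (ht0 : 0 < t) (ht1 : t < 1 / (4 ^ n * Real.exp 1))
    (hvol : (volume (symmDiff K Q)).toReal ≤ t) :
    gauge (K - K) ((volume Q).toReal⁻¹ • ∫ x in Q, x ∂volume) ≤ 4 * n * t :=
  stmt12_general K Q hK hKcp hKint hcent hvolK hQ hQcp t ht0 ht1 hvol
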